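/- Let A, B be self-adjoint operators on a Hilbert space with A ≥ 0 invertible and ‖A^{-1}B‖ < 1 (operator norm). Then (1 − ‖A^{-1}B‖)² ⟨A²f, f⟩ ≤ ⟨|A+B|² f, f⟩ ≤ (1 + ‖A^{-1}B‖)² ⟨A²f, f⟩ for all f, and consequently, by operator monotonicity of the square root, (1 − ‖A^{-1}B‖) A ≤ |A+B| ≤ (1 + ‖A^{-1}B‖) A. -/

import Mathlib

/-!
Since `A + B = (1 + B A⁻¹) A` and, taking adjoints, `‖B A⁻¹‖ = ‖A⁻¹ B‖ = c`, the vectors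
`(A + B) f` and `A f` differ in norm by at most `c ‖A f‖`. Squaring gives the quadratic form
bounds, i.e. `(1 - c)² A² ≤ |A + B|² ≤ (1 + c)² A²`, and the operator monotonicity of the square
root turns these into `(1 - c) A ≤ |A + B| ≤ (1 + c) A`.
-/

open ContinuousLinearMap

lemma CFC.le_of_mul_self_le_mul_self {A : Type*} [NonUnitalCStarAlgebra A] [PartialOrder A]
    [StarOrderedRing A] {a b : A} (ha : 0 ≤ a) (hb : 0 ≤ b) (h : a * a ≤ b * b) : a ≤ b := by
  simpa only [CFC.sqrt_mul_self a ha, CFC.sqrt_mul_self b hb] using CFC.sqrt_le_sqrt _ _ h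

namespace ContinuousLinearMap

lemma abs_norm_add_apply_sub_norm_apply_le {𝕜 E : Type*} [NontriviallyNormedField 𝕜]
    [SeminormedAddCommGroup E] [NormedSpace 𝕜 E] {A A' : E →L[𝕜] E} (hA' : A' * A = 1)
    (B : E →L[𝕜] E) (f : E) : |‖(A + B) f‖ - ‖A f‖| ≤ ‖B * A'‖ * ‖A f‖ := by
  have h : (A + B) f = A f + (B * A') (A f) := by
    rw [← mul_apply_eq_comp (B * A'), mul_assoc, hA', mul_one, add_apply]
  calc |‖(A + B) f‖ - ‖A f‖| ≤ ‖(A + B) f - A f‖ := abs_norm_sub_norm_le _ _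
    _ = ‖(B * A') (A f)‖ := by rw [h, add_sub_cancel_left]
    _ ≤ ‖B * A'‖ * ‖A f‖ := le_opNorm _ _

variable {𝕜 E : Type*} [RCLike 𝕜] [NormedAddCommGroup E] [InnerProductSpace 𝕜 E]
  [CompleteSpace E]

lemma re_inner_star_mul_self_apply (T : E →L[𝕜] E) (x : E) :
    RCLike.re (inner 𝕜 ((star T * T) x) x) = ‖T x‖ ^ 2 :=
  (T.apply_norm_sq_eq_inner_adjoint_left x).symm

lemma star_mul_self_le_star_mul_self_iff {T U : E →L[𝕜] E} :
    star T * T ≤ star U * U ↔ ∀ x, ‖T x‖ ≤ ‖U x‖ := by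
  simp only [le_def, isPositive_def', (IsSelfAdjoint.star_mul_self U).sub
    (IsSelfAdjoint.star_mul_self T), true_and, reApplyInnerSelf_apply, sub_apply,
    inner_sub_left, map_sub, re_inner_star_mul_self_apply, sub_nonneg]
  exact forall_congr' fun x => sq_le_sq₀ (norm_nonneg _) (norm_nonneg _)

lemma norm_apply_eq_of_mul_self_eq_star_mul_self {S T : E →L[𝕜] E} (hS : IsSelfAdjoint S)
    (hST : S * S = star T * T) (x : E) : ‖S x‖ = ‖T x‖ := by
  rw [← sq_eq_sq₀ (norm_nonneg _) (norm_nonneg _), ← re_inner_star_mul_self_apply,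
    ← re_inner_star_mul_self_apply, hS.star_eq, hST]

end ContinuousLinearMap

namespace ContinuousLinearMap.IsPositive

variable {E : Type*} [NormedAddCommGroup E] [InnerProductSpace ℂ E] [CompleteSpace E]

lemma le_of_forall_norm_apply_le {P Q : E →L[ℂ] E} (hP : P.IsPositive) (hQ : Q.IsPositive)
    (h : ∀ x, ‖P x‖ ≤ ‖Q x‖) : P ≤ Q := by
  refine CFC.le_of_mul_self_le_mul_self ((nonneg_iff_isPositive P).2 hP)
    ((nonneg_iff_isPositive Q).2 hQ) ?_
  have hPP : P * P = star P * P := by rw [hP.isSelfAdjoint.star_eq]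
  have hQQ : Q * Q = star Q * Q := by rw [hQ.isSelfAdjoint.star_eq]
  rw [hPP, hQQ]
  exact star_mul_self_le_star_mul_self_iff.2 h

end ContinuousLinearMap.IsPositive

/-- Let `A, B` be self-adjoint operators on a complex Hilbert space with `A ≥ 0` invertible
(with inverse `A'`) and `c := ‖A⁻¹B‖ < 1`.  Then
`(1 − c)² ⟨A²f, f⟩ ≤ ⟨|A+B|² f, f⟩ ≤ (1 + c)² ⟨A²f, f⟩` for all `f` (where
`|A+B|² = (A+B)*(A+B)`), and consequently, by operator monotonicity of the square root,
`(1 − c) A ≤ |A+B| ≤ (1 + c) A`, where `|A+B|` is the positive operator `S` with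
`S² = (A+B)*(A+B)`. -/
theorem statement15 {H : Type*} [NormedAddCommGroup H] [InnerProductSpace ℂ H]
    [CompleteSpace H] (A B A' S : H →L[ℂ] H)
    (hA : A.IsPositive) (hB : IsSelfAdjoint B)
    (hA'1 : A * A' = 1) (hA'2 : A' * A = 1)
    (hc : ‖A' * B‖ < 1)
    (hS : S.IsPositive) (hSsq : S * S = star (A + B) * (A + B)) :
    (∀ f : H,
      (1 - ‖A' * B‖) ^ 2 * ((inner ℂ ((A * A) f) f : ℂ)).re
          ≤ ((inner ℂ ((star (A + B) * (A + B)) f) f : ℂ)).re ∧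
      ((inner ℂ ((star (A + B) * (A + B)) f) f : ℂ)).re
          ≤ (1 + ‖A' * B‖) ^ 2 * ((inner ℂ ((A * A) f) f : ℂ)).re) ∧
    (S - ((1 - ‖A' * B‖ : ℝ) : ℂ) • A).IsPositive ∧
    (((1 + ‖A' * B‖ : ℝ) : ℂ) • A - S).IsPositive := by
  set c := ‖A' * B‖
  have hA'sa : IsSelfAdjoint A' := left_inv_eq_right_inv
    (by rw [← hA.isSelfAdjoint.star_eq, ← star_mul, hA'1, star_one]) hA'1
  have hBA' : ‖B * A'‖ = c := by rw [← norm_star, star_mul, hA'sa.star_eq, hB.star_eq]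
  have hclose (f : H) : |‖(A + B) f‖ - ‖A f‖| ≤ c * ‖A f‖ :=
    hBA' ▸ abs_norm_add_apply_sub_norm_apply_le hA'2 B f
  have hlower (f : H) : (1 - c) * ‖A f‖ ≤ ‖(A + B) f‖ := by linarith [(abs_le.1 (hclose f)).1]
  have hupper (f : H) : ‖(A + B) f‖ ≤ (1 + c) * ‖A f‖ := by linarith [(abs_le.1 (hclose f)).2]
  have hAA : A * A = star A * A := by rw [hA.isSelfAdjoint.star_eq]
  have hsub_nonneg : 0 ≤ 1 - c := by linarith
  have hadd_nonneg : 0 ≤ 1 + c := by linarith [norm_nonneg (A' * B)]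
  have hnorm_smul {r : ℝ} (hr : 0 ≤ r) (f : H) : ‖((r : ℂ) • A) f‖ = r * ‖A f‖ := by
    rw [smul_apply, norm_smul, Complex.norm_real, Real.norm_of_nonneg hr]
  have hpos {r : ℝ} (hr : 0 ≤ r) : ((r : ℂ) • A).IsPositive :=
    hA.smul_of_nonneg (Complex.zero_le_real.2 hr)
  have hSnorm := norm_apply_eq_of_mul_self_eq_star_mul_self hS.isSelfAdjoint hSsq
  refine ⟨fun f => ?_, ?_, ?_⟩
  · have hquad (T : H →L[ℂ] H) : (inner ℂ ((star T * T) f) f).re = ‖T f‖ ^ 2 :=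
      re_inner_star_mul_self_apply T f
    rw [hAA, hquad, hquad, ← mul_pow, ← mul_pow]
    exact ⟨pow_le_pow_left₀ (mul_nonneg hsub_nonneg (norm_nonneg _)) (hlower f) 2,
      pow_le_pow_left₀ (norm_nonneg _) (hupper f) 2⟩
  · refine (le_def _ _).1 ((hpos hsub_nonneg).le_of_forall_norm_apply_le hS fun f => ?_)
    rw [hnorm_smul hsub_nonneg, hSnorm]
    exact hlower f
  · refine (le_def _ _).1 (hS.le_of_forall_norm_apply_le (hpos hadd_nonneg) fun f => ?_)
    rw [hnorm_smul hadd_nonneg, hSnorm]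
    exact hupper f
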